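/- arXiv:2508.12058 — 3 statements merged into one kernel-verified Lean document; each statement's English description precedes it below -/
import Mathlib

section
/- Let ξ be an ℕ-valued random variable and (X_i)_{i≥1} a sequence of identically distributed nonnegative random variables with finite n-th moment, such that the whole sequence (X_i) is independent of ξ. Then E[(∑_{i=1}^ξ X_i)^n] ≤ E[ξ^n]·E[X_1^n]. -/
open MeasureTheory ProbabilityTheory
open scoped ENNReal NNReal

/-! Conditioning on `ξ = k` and using independence, `E[S_ξ^n] = ∑ₖ P(ξ = k) E[S_k^n]` with
`S_k = X_0 + ⋯ + X_{k-1}`. By the power-mean inequality `S_k^n ≤ k^{n-1} ∑_{i<k} X_i^n`, and the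
`X_i` share the `n`-th moment, so `E[S_k^n] ≤ k^n E[X_0^n]`; summing over `k` gives
`E[ξ^n] E[X_0^n]`. -/

theorem ENNReal.pow_sum_le_card_pow_mul_sum_pow {ι : Type*} (s : Finset ι) (x : ι → ℝ≥0∞)
    (m : ℕ) : (∑ i ∈ s, x i) ^ (m + 1) ≤ (s.card : ℝ≥0∞) ^ m * ∑ i ∈ s, x i ^ (m + 1) := by
  have h := ENNReal.rpow_sum_le_const_mul_sum_rpow (s := s) (f := x) (p := (m + 1 : ℝ))
    (by linarith [m.cast_nonneg (α := ℝ)])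
  simpa [← ENNReal.rpow_natCast] using h

section

variable {Ω : Type*} [MeasurableSpace Ω] {μ : Measure Ω}

theorem lintegral_sum_pow_le {ι : Type*} (s : Finset ι) {f : ι → Ω → ℝ≥0∞}
    (hf : ∀ i ∈ s, Measurable (f i)) {n : ℕ} (hn : n ≠ 0) {M : ℝ≥0∞}
    (hM : ∀ i ∈ s, ∫⁻ ω, f i ω ^ n ∂μ ≤ M) :
    ∫⁻ ω, (∑ i ∈ s, f i ω) ^ n ∂μ ≤ (s.card : ℝ≥0∞) ^ n * M := by
  obtain ⟨m, rfl⟩ := Nat.exists_eq_succ_of_ne_zero hn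
  calc ∫⁻ ω, (∑ i ∈ s, f i ω) ^ (m + 1) ∂μ
      ≤ ∫⁻ ω, (s.card : ℝ≥0∞) ^ m * ∑ i ∈ s, f i ω ^ (m + 1) ∂μ :=
        lintegral_mono fun ω => ENNReal.pow_sum_le_card_pow_mul_sum_pow s (f · ω) m
    _ = (s.card : ℝ≥0∞) ^ m * ∑ i ∈ s, ∫⁻ ω, f i ω ^ (m + 1) ∂μ := by
        rw [lintegral_const_mul' _ _ (by simp),
          lintegral_finsetSum _ fun i hi => (hf i hi).pow_const _]
    _ ≤ (s.card : ℝ≥0∞) ^ m * ∑ _i ∈ s, M := by gcongr with i hi; exact hM i hi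
    _ = (s.card : ℝ≥0∞) ^ (m + 1) * M := by
        rw [Finset.sum_const, nsmul_eq_mul, ← mul_assoc, pow_succ]

theorem lintegral_comp_eq_tsum_of_indepFun {β κ : Type*} [MeasurableSpace β] [Countable κ]
    [MeasurableSpace κ] [MeasurableSingletonClass κ] {Y : Ω → β} {ξ : Ω → κ}
    (hY : Measurable Y) (hξ : Measurable ξ) (hind : IndepFun Y ξ μ) {F : κ → β → ℝ≥0∞}
    (hF : ∀ k, Measurable (F k)) :
    ∫⁻ ω, F (ξ ω) (Y ω) ∂μ = ∑' k, (∫⁻ ω, F k (Y ω) ∂μ) * μ (ξ ⁻¹' {k}) := by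
  have hsplit : ∀ ω, F (ξ ω) (Y ω) = ∑' k, F k (Y ω) * ({k} : Set κ).indicator 1 (ξ ω) := by
    intro ω
    rw [tsum_eq_single (ξ ω) fun k hk => by simp [Ne.symm hk]]
    simp
  have hindicator : ∀ k, Measurable (({k} : Set κ).indicator (1 : κ → ℝ≥0∞)) := fun k =>
    measurable_const.indicator (measurableSet_singleton k)
  simp_rw [hsplit]
  rw [lintegral_tsum (f := fun k ω => F k (Y ω) * ({k} : Set κ).indicator 1 (ξ ω))
    fun k => (((hF k).comp hY).mul ((hindicator k).comp hξ)).aemeasurable]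
  refine tsum_congr fun k => ?_
  rw [lintegral_mul_eq_lintegral_mul_lintegral_of_indepFun'' (f := fun ω => F k (Y ω))
    (g := fun ω => ({k} : Set κ).indicator 1 (ξ ω)) ((hF k).comp hY).aemeasurable
    ((hindicator k).comp hξ).aemeasurable (hind.comp (hF k) (hindicator k)),
    ← lintegral_indicator_one (hξ (measurableSet_singleton k))]
  rfl

end

theorem random_sum_moment_bound_general {Ω : Type*} [MeasurableSpace Ω]
    (P : Measure Ω) [IsProbabilityMeasure P]
    (n : ℕ) (ξ : Ω → ℕ) (X : ℕ → Ω → ℝ≥0)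
    (hξ : Measurable ξ) (hX : ∀ i, Measurable (X i))
    (hid : ∀ i, Measure.map (X i) P = Measure.map (X 0) P)
    (hindep : IndepFun (fun ω => fun i => X i ω) ξ P) :
    ∫⁻ ω, (∑ i ∈ Finset.range (ξ ω), (X i ω : ℝ≥0∞)) ^ n ∂P
      ≤ (∫⁻ ω, (ξ ω : ℝ≥0∞) ^ n ∂P) * ∫⁻ ω, (X 0 ω : ℝ≥0∞) ^ n ∂P := by
  rcases eq_or_ne n 0 with rfl | hn
  · simp
  set M := ∫⁻ ω, (X 0 ω : ℝ≥0∞) ^ n ∂P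
  have hpow : Measurable fun x : ℝ≥0 => (x : ℝ≥0∞) ^ n :=
    measurable_coe_nnreal_ennreal.pow_const n
  have hmoment : ∀ i, ∫⁻ ω, (X i ω : ℝ≥0∞) ^ n ∂P = M := fun i => by
    rw [← lintegral_map hpow (hX i), hid i, lintegral_map hpow (hX 0)]
  have hfixed : ∀ k, ∫⁻ ω, (∑ i ∈ Finset.range k, (X i ω : ℝ≥0∞)) ^ n ∂P ≤ k ^ n * M := by
    intro k
    simpa using lintegral_sum_pow_le (μ := P) (Finset.range k)
      (fun i _ => (hX i).coe_nnreal_ennreal) hn fun i _ => (hmoment i).le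
  calc ∫⁻ ω, (∑ i ∈ Finset.range (ξ ω), (X i ω : ℝ≥0∞)) ^ n ∂P
      = ∑' k, (∫⁻ ω, (∑ i ∈ Finset.range k, (X i ω : ℝ≥0∞)) ^ n ∂P) * P (ξ ⁻¹' {k}) :=
        lintegral_comp_eq_tsum_of_indepFun (measurable_pi_lambda _ hX) hξ hindep
          (F := fun k x => (∑ i ∈ Finset.range k, (x i : ℝ≥0∞)) ^ n) fun k => by fun_prop
    _ ≤ ∑' k : ℕ, (k : ℝ≥0∞) ^ n * P.map ξ {k} * M := by
        refine ENNReal.tsum_le_tsum fun k => ?_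
        rw [Measure.map_apply hξ (measurableSet_singleton k), mul_right_comm]
        exact mul_le_mul_left (hfixed k) _
    _ = (∫⁻ ω, (ξ ω : ℝ≥0∞) ^ n ∂P) * M := by
        rw [ENNReal.tsum_mul_right, ← lintegral_countable', lintegral_map (by fun_prop) hξ]

/-- **Basic moment lemma for random sums.** If `ξ` is an `ℕ`-valued random variable and
`(X_i)` is a sequence of identically distributed nonnegative random variables with finite
`n`-th moment, the whole sequence being independent of `ξ`, then
`E[(∑_{i=1}^ξ X_i)^n] ≤ E[ξ^n] * E[X_1^n]`. -/
theorem random_sum_moment_bound {Ω : Type*} [MeasurableSpace Ω]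
    (P : Measure Ω) [IsProbabilityMeasure P]
    (n : ℕ) (ξ : Ω → ℕ) (X : ℕ → Ω → ℝ≥0)
    (hξ : Measurable ξ) (hX : ∀ i, Measurable (X i))
    (hid : ∀ i, Measure.map (X i) P = Measure.map (X 0) P)
    (hindep : IndepFun (fun ω => fun i => X i ω) ξ P)
    (hmom : ∫⁻ ω, (X 0 ω : ℝ≥0∞) ^ n ∂P < ⊤) :
    ∫⁻ ω, (∑ i ∈ Finset.range (ξ ω), (X i ω : ℝ≥0∞)) ^ n ∂P
      ≤ (∫⁻ ω, (ξ ω : ℝ≥0∞) ^ n ∂P) * ∫⁻ ω, (X 0 ω : ℝ≥0∞) ^ n ∂P :=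
  random_sum_moment_bound_general P n ξ X hξ hX hid hindep
end

section
/- Let Q be a Poisson random measure on (E, 𝓔) with mean measure μ and f ∈ L¹(μ). Then the characteristic function of the compensated integral satisfies E[exp(i·Q̄(f))] = exp(μ(e^{if} − i f − 1)). -/
/-!
For a simple function `s` with fibres `A_y = s⁻¹{y}`, `Q̄(s) = ∑ y (Q(A_y) − μ(A_y))` is a sum of
independent compensated Poisson variables, so `E[exp(i Q̄(s))] = ∏ exp(μ(A_y) ψ(y))` with
`ψ(r) = e^{ir} − ir − 1`, and this product is `exp(μ(ψ ∘ s))`. Both sides of the identity are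
`2`-Lipschitz in `f` for the `L¹(μ)` distance: `|e^{ia} − e^{ib}| ≤ |a − b|` and `|ψ(a) − ψ(b)| ≤
2|a − b|`, together with Campbell's formula `E[Q(g)] = μ(g)` for `g ≥ 0`, which follows from
`E[Q(A)] = μ(A)` on sets of finite measure by σ-finiteness. Approximating `f` in `L¹(μ)` by simple
functions gives the identity for measurable `f`, and a `μ`-null change of `f` changes `Q̄(f)` only
on a `P`-null set since `E[Q(N)] = μ(N)`.
-/

open MeasureTheory ProbabilityTheory
open scoped ENNReal

/-- `Q` is a Poisson random measure on `E` with mean measure `μ`, defined on the probability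
space `(Ω, P)` : for every measurable set `A` of finite mean measure, `ω ↦ Q ω A` is a
Poisson random variable with mean `μ A`, and the masses of pairwise disjoint measurable sets
are independent. -/
def IsPoissonRandomMeasure {Ω E : Type*} [MeasurableSpace Ω] [MeasurableSpace E]
    (P : Measure Ω) (Q : Ω → Measure E) (μ : Measure E) : Prop :=
  (∀ A : Set E, MeasurableSet A → μ A < ⊤ →
      Measurable (fun ω => Q ω A) ∧
      ∀ k : ℕ, P {ω | Q ω A = k} =
        ENNReal.ofReal (Real.exp (-(μ A).toReal) * (μ A).toReal ^ k / (Nat.factorial k))) ∧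
  ∀ (n : ℕ) (A : Fin n → Set E), (∀ i, MeasurableSet (A i)) →
    (Pairwise fun i j => Disjoint (A i) (A j)) →
    iIndepFun (fun i ω => Q ω (A i)) P

/-- The compensated integral `Q̄(f) = ∫ f dQ − ∫ f dμ` of `f` against the compensated
Poisson random measure `Q̄ = Q − μ`. -/
noncomputable def compensatedIntegral {Ω E : Type*} [MeasurableSpace Ω] [MeasurableSpace E]
    (Q : Ω → Measure E) (μ : Measure E) (f : E → ℝ) (ω : Ω) : ℝ :=
  (∫ x, f x ∂(Q ω)) - ∫ x, f x ∂μ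

open Filter Complex Topology Function
open scoped NNReal

-- `ψ(r) = log E[e^{ir(N − 1)}]` for `N` Poisson of mean `1`.
noncomputable def compensatedPoissonExponent (r : ℝ) : ℂ := cexp (I * r) - I * r - 1

@[simp]
lemma compensatedPoissonExponent_zero : compensatedPoissonExponent 0 = 0 := by
  simp [compensatedPoissonExponent]

lemma continuous_compensatedPoissonExponent : Continuous compensatedPoissonExponent := by
  unfold compensatedPoissonExponent
  fun_prop

lemma enorm_cexp_I_mul_sub_cexp_I_mul_le (a b : ℝ) :
    ‖cexp (I * a) - cexp (I * b)‖ₑ ≤ ‖a - b‖ₑ := by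
  have h : cexp (I * a) - cexp (I * b) = cexp (I * b) * (cexp (I * ↑(a - b)) - 1) := by
    rw [mul_sub, ← Complex.exp_add]
    push_cast
    ring_nf
  rw [h, enorm_mul, enorm_exp_I_mul_ofReal, one_mul]
  exact Real.enorm_exp_I_mul_ofReal_sub_one_le

lemma enorm_compensatedPoissonExponent_sub_le (a b : ℝ) :
    ‖compensatedPoissonExponent a - compensatedPoissonExponent b‖ₑ ≤ 2 * ‖a - b‖ₑ := by
  have h : compensatedPoissonExponent a - compensatedPoissonExponent b
      = (cexp (I * a) - cexp (I * b)) - I * ↑(a - b) := by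
    simp only [compensatedPoissonExponent]
    push_cast
    ring
  have hI : ‖I * ↑(a - b)‖ₑ = ‖a - b‖ₑ := by
    rw [← ofReal_norm, ← ofReal_norm, norm_mul, norm_I, one_mul, norm_real]
  calc _ ≤ ‖cexp (I * a) - cexp (I * b)‖ₑ + ‖I * ↑(a - b)‖ₑ := h ▸ enorm_sub_le
    _ ≤ ‖a - b‖ₑ + ‖a - b‖ₑ := by
      rw [hI]
      gcongr
      exact enorm_cexp_I_mul_sub_cexp_I_mul_le a b
    _ = 2 * ‖a - b‖ₑ := (two_mul _).symm

section Integral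

variable {α : Type*} [MeasurableSpace α] {μ : Measure α}

lemma MeasureTheory.Integrable.compensatedPoissonExponent_comp {f : α → ℝ}
    (hf : Integrable f μ) : Integrable (fun x => compensatedPoissonExponent (f x)) μ := by
  refine ⟨continuous_compensatedPoissonExponent.comp_aestronglyMeasurable hf.1, ?_⟩
  calc ∫⁻ x, ‖compensatedPoissonExponent (f x)‖ₑ ∂μ ≤ ∫⁻ x, 2 * ‖f x‖ₑ ∂μ :=
        lintegral_mono fun x => by simpa using enorm_compensatedPoissonExponent_sub_le (f x) 0
    _ < ⊤ := by
        rw [lintegral_const_mul' _ _ ENNReal.ofNat_ne_top]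
        exact ENNReal.mul_lt_top ENNReal.ofNat_lt_top hf.2

lemma enorm_integral_compensatedPoissonExponent_sub_le {g h : α → ℝ} (hg : Integrable g μ)
    (hh : Integrable h μ) :
    ‖∫ x, compensatedPoissonExponent (g x) ∂μ - ∫ x, compensatedPoissonExponent (h x) ∂μ‖ₑ
      ≤ 2 * ∫⁻ x, ‖g x - h x‖ₑ ∂μ := by
  rw [← integral_sub hg.compensatedPoissonExponent_comp hh.compensatedPoissonExponent_comp,
    ← lintegral_const_mul' _ _ ENNReal.ofNat_ne_top]
  exact (enorm_integral_le_lintegral_enorm _).trans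
    (lintegral_mono fun x => enorm_compensatedPoissonExponent_sub_le _ _)

end Integral

lemma tendsto_of_enorm_sub_le {ι F : Type*} [NormedAddCommGroup F] {l : Filter ι} {u : ι → F}
    {a : F} {d : ι → ℝ≥0∞} {C : ℝ≥0∞} (hC : C ≠ ⊤) (hd : Tendsto d l (𝓝 0))
    (h : ∀ i, ‖u i - a‖ₑ ≤ C * d i) : Tendsto u l (𝓝 a) := by
  rw [tendsto_iff_edist_tendsto_0]
  simp_rw [edist_eq_enorm_sub]
  refine tendsto_of_tendsto_of_tendsto_of_le_of_le tendsto_const_nhds ?_ (fun _ => zero_le) h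
  simpa using ENNReal.Tendsto.const_mul hd (Or.inr hC)

lemma measure_eq_iSup_measure_inter_spanningSets {E : Type*} [MeasurableSpace E]
    (ν μ : Measure E) [SigmaFinite μ] (A : Set E) :
    ν A = ⨆ n, ν (A ∩ spanningSets μ n) := by
  rw [← Monotone.measure_iUnion fun i j hij =>
      Set.inter_subset_inter_right A (monotone_spanningSets μ hij),
    ← Set.inter_iUnion, iUnion_spanningSets, Set.inter_univ]

lemma hasSum_natCast_mul_poisson (r : ℝ≥0) :
    HasSum (fun n : ℕ => n * (Real.exp (-r) * r ^ n / n.factorial)) r := by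
  have hshift : (fun n : ℕ => ((n + 1 : ℕ) : ℝ) * (Real.exp (-r) * r ^ (n + 1) / (n + 1).factorial))
      = fun n => r * (Real.exp (-r) * r ^ n / n.factorial) := by
    funext n
    rw [Nat.factorial_succ]
    push_cast
    field_simp
    ring
  have h := (hasSum_one_poissonMeasure r).mul_left (r : ℝ)
  rw [mul_one, ← hshift] at h
  simpa using (hasSum_nat_add_iff' 1).1 (by simpa using h)

lemma lintegral_id_map_cast_poissonMeasure (r : ℝ≥0) : ∫⁻ x, x ∂Po(ℝ≥0∞, r) = r := by
  rw [lintegral_map (f := fun x => x) measurable_id .of_discrete, poissonMeasure,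
    lintegral_sum_measure]
  simp only [lintegral_smul_measure, lintegral_dirac, smul_eq_mul]
  have h := hasSum_natCast_mul_poisson r
  calc _ = ∑' n : ℕ, ENNReal.ofReal (n * (Real.exp (-r) * r ^ n / n.factorial)) :=
        tsum_congr fun n => by
          rw [ENNReal.ofReal_mul (by positivity), ENNReal.ofReal_natCast, mul_comm]
    _ = r := by
        rw [← ENNReal.ofReal_tsum_of_nonneg (fun n => by positivity) h.summable, h.tsum_eq,
          ENNReal.ofReal_coe_nnreal]

lemma hasLaw_map_cast_poissonMeasure {Ω R : Type*} [MeasurableSpace Ω] {P : Measure Ω}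
    [IsProbabilityMeasure P] [AddMonoidWithOne R] [CharZero R] [MeasurableSpace R]
    [MeasurableSingletonClass R] {X : Ω → R} (hX : Measurable X) {r : ℝ≥0}
    (h : ∀ n : ℕ, P (X ⁻¹' {(n : R)}) = Po(r) {n}) :
    HasLaw X Po(R, r) P := by
  -- `Po(R, r)` is carried by `range Nat.cast`, where it agrees with `P.map X`; both have mass one.
  have hsum : Po(R, r) = Measure.sum fun n : ℕ => P.map X {(n : R)} • Measure.dirac (n : R) := by
    conv_lhs => rw [← Measure.sum_smul_dirac Po(r)]
    rw [Measure.map_sum .of_discrete]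
    simp_rw [Measure.map_smul, Measure.map_dirac,
      Measure.map_apply hX (measurableSet_singleton _), h]
  have hrestrict : (P.map X).restrict (Set.range (Nat.cast : ℕ → R))
      = Measure.sum fun n : ℕ => P.map X {(n : R)} • Measure.dirac (n : R) := by
    rw [← Set.iUnion_singleton_eq_range, Measure.restrict_iUnion
      (fun i j hij => Set.disjoint_singleton.2 (Nat.cast_injective.ne hij))
      fun _ => measurableSet_singleton _]
    simp only [Measure.restrict_singleton]
  refine ⟨hX.aemeasurable, (Measure.eq_of_le_of_measure_univ_eq ?_ ?_).symm⟩
  · rw [hsum, ← hrestrict]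
    exact Measure.restrict_le_self
  · rw [Measure.map_apply hX MeasurableSet.univ]
    simp

section CompensatedIntegral

variable {Ω E : Type*} [MeasurableSpace Ω] [MeasurableSpace E] {Q : Ω → Measure E} {μ : Measure E}

lemma compensatedIntegral_sub {g h : E → ℝ} {ω : Ω} (hgQ : Integrable g (Q ω))
    (hhQ : Integrable h (Q ω)) (hg : Integrable g μ) (hh : Integrable h μ) :
    compensatedIntegral Q μ g ω - compensatedIntegral Q μ h ω
      = compensatedIntegral Q μ (fun x => g x - h x) ω := by
  simp only [compensatedIntegral, integral_sub hgQ hhQ, integral_sub hg hh]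
  ring

lemma compensatedIntegral_simpleFunc (s : SimpleFunc E ℝ) {ω : Ω} (hsQ : Integrable s (Q ω))
    (hsμ : Integrable s μ) :
    compensatedIntegral Q μ s ω
      = ∑ y ∈ s.range, y * ((Q ω (s ⁻¹' {y})).toReal - (μ (s ⁻¹' {y})).toReal) := by
  rw [compensatedIntegral, ← s.integral_eq_integral hsQ, ← s.integral_eq_integral hsμ,
    SimpleFunc.integral_eq, SimpleFunc.integral_eq, ← Finset.sum_sub_distrib]
  exact Finset.sum_congr rfl fun y _ => by simp only [smul_eq_mul, measureReal_def]; ring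

end CompensatedIntegral

namespace IsPoissonRandomMeasure

variable {Ω E : Type*} [MeasurableSpace Ω] [MeasurableSpace E] {P : Measure Ω}
  {Q : Ω → Measure E} {μ : Measure E}

lemma measurable_apply [SigmaFinite μ] (hQ : IsPoissonRandomMeasure P Q μ) {A : Set E}
    (hA : MeasurableSet A) : Measurable fun ω => Q ω A := by
  simp_rw [measure_eq_iSup_measure_inter_spanningSets _ μ A]
  exact .iSup fun n => (hQ.1 _ (hA.inter (measurableSet_spanningSets μ n))
    ((measure_mono Set.inter_subset_right).trans_lt (measure_spanningSets_lt_top μ n))).1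

protected lemma measurable [SigmaFinite μ] (hQ : IsPoissonRandomMeasure P Q μ) : Measurable Q :=
  Measure.measurable_of_measurable_coe _ fun _ hA => hQ.measurable_apply hA

lemma hasLaw_apply [IsProbabilityMeasure P] (hQ : IsPoissonRandomMeasure P Q μ) {A : Set E}
    (hA : MeasurableSet A) (hμA : μ A < ⊤) :
    HasLaw (fun ω => Q ω A) Po(ℝ≥0∞, (μ A).toNNReal) P :=
  hasLaw_map_cast_poissonMeasure (hQ.1 A hA hμA).1 fun n => by
    rw [poissonMeasure_singleton]
    exact (hQ.1 A hA hμA).2 n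

lemma lintegral_apply_of_lt_top [IsProbabilityMeasure P] (hQ : IsPoissonRandomMeasure P Q μ)
    {A : Set E} (hA : MeasurableSet A) (hμA : μ A < ⊤) : ∫⁻ ω, Q ω A ∂P = μ A := by
  calc ∫⁻ ω, Q ω A ∂P = ∫⁻ x, x ∂Po(ℝ≥0∞, (μ A).toNNReal) :=
        (hQ.hasLaw_apply hA hμA).lintegral_comp aemeasurable_id
    _ = μ A := by rw [lintegral_id_map_cast_poissonMeasure, ENNReal.coe_toNNReal hμA.ne]

lemma bind_eq [IsProbabilityMeasure P] [SigmaFinite μ] (hQ : IsPoissonRandomMeasure P Q μ) :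
    P.bind Q = μ := by
  ext A hA
  rw [measure_eq_iSup_measure_inter_spanningSets _ μ A,
    measure_eq_iSup_measure_inter_spanningSets μ μ A]
  refine iSup_congr fun n => ?_
  have hAn := hA.inter (measurableSet_spanningSets μ n)
  rw [Measure.bind_apply hAn hQ.measurable.aemeasurable, hQ.lintegral_apply_of_lt_top hAn
    ((measure_mono Set.inter_subset_right).trans_lt (measure_spanningSets_lt_top μ n))]

lemma lintegral_lintegral [IsProbabilityMeasure P] [SigmaFinite μ]
    (hQ : IsPoissonRandomMeasure P Q μ) {g : E → ℝ≥0∞} (hg : Measurable g) :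
    ∫⁻ ω, ∫⁻ x, g x ∂Q ω ∂P = ∫⁻ x, g x ∂μ := by
  rw [← Measure.lintegral_bind hQ.measurable.aemeasurable hg.aemeasurable, hQ.bind_eq]

lemma ae_apply_eq_zero [IsProbabilityMeasure P] [SigmaFinite μ]
    (hQ : IsPoissonRandomMeasure P Q μ) {N : Set E} (hN : μ N = 0) : ∀ᵐ ω ∂P, Q ω N = 0 := by
  have hT := measurableSet_toMeasurable μ N
  have h : ∫⁻ ω, Q ω (toMeasurable μ N) ∂P = 0 := by
    rw [← Measure.bind_apply hT hQ.measurable.aemeasurable, hQ.bind_eq, measure_toMeasurable, hN]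
  filter_upwards [(lintegral_eq_zero_iff (hQ.measurable_apply hT)).1 h] with ω hω
  exact measure_mono_null (subset_toMeasurable μ N) hω

lemma compensatedIntegral_congr_ae [IsProbabilityMeasure P] [SigmaFinite μ]
    (hQ : IsPoissonRandomMeasure P Q μ) {f g : E → ℝ} (hfg : f =ᵐ[μ] g) :
    compensatedIntegral Q μ f =ᵐ[P] compensatedIntegral Q μ g := by
  filter_upwards [hQ.ae_apply_eq_zero (ae_iff.1 hfg)] with ω hω
  have hfgQ : f =ᵐ[Q ω] g := ae_iff.2 hω
  simp only [compensatedIntegral, integral_congr_ae hfg, integral_congr_ae hfgQ]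

lemma ae_integrable [IsProbabilityMeasure P] [SigmaFinite μ] (hQ : IsPoissonRandomMeasure P Q μ)
    {f : E → ℝ} (hfm : Measurable f) (hf : Integrable f μ) : ∀ᵐ ω ∂P, Integrable f (Q ω) := by
  have hlt : ∀ᵐ ω ∂P, ∫⁻ x, ‖f x‖ₑ ∂Q ω < ⊤ :=
    ae_lt_top ((Measure.measurable_lintegral hfm.enorm).comp hQ.measurable)
      (by rw [hQ.lintegral_lintegral hfm.enorm]; exact hf.2.ne)
  filter_upwards [hlt] with ω hω using ⟨hfm.aestronglyMeasurable, hω⟩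

lemma integrable_cexp_I_mul_compensatedIntegral [IsProbabilityMeasure P] [SigmaFinite μ]
    (hQ : IsPoissonRandomMeasure P Q μ) {f : E → ℝ} (hf : Measurable f) :
    Integrable (fun ω => cexp (I * compensatedIntegral Q μ f ω)) P := by
  have hm : StronglyMeasurable (compensatedIntegral Q μ f) :=
    (hf.stronglyMeasurable.integral_kernel (κ := ⟨Q, hQ.measurable⟩)).sub stronglyMeasurable_const
  refine .of_bound (by fun_prop) 1 (ae_of_all _ fun ω => ?_)
  rw [norm_exp_I_mul_ofReal]

lemma iIndepFun_apply {ι : Type*} [Fintype ι] (hQ : IsPoissonRandomMeasure P Q μ)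
    {A : ι → Set E} (hA : ∀ i, MeasurableSet (A i)) (hd : Pairwise (Disjoint on A)) :
    iIndepFun (fun i ω => Q ω (A i)) P := by
  let e := Fintype.equivFin ι
  exact iIndepFun.of_precomp e.symm.surjective
    (hQ.2 _ (A ∘ e.symm) (fun i => hA _) (hd.comp_of_injective e.symm.injective))

lemma integral_cexp_I_mul_compensated_apply [IsProbabilityMeasure P]
    (hQ : IsPoissonRandomMeasure P Q μ) {A : Set E} (hA : MeasurableSet A) (hμA : μ A < ⊤)
    (c : ℝ) :
    ∫ ω, cexp (I * (c * ((Q ω A).toReal - (μ A).toReal))) ∂P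
      = cexp ((μ A).toReal * compensatedPoissonExponent c) := by
  have hX : HasLaw (fun ω => (Q ω A).toReal) Po(ℝ, (μ A).toNNReal) P := by
    refine HasLaw.fun_comp ⟨by fun_prop, ?_⟩ (hQ.hasLaw_apply hA hμA)
    rw [Measure.map_map ENNReal.measurable_toReal .of_discrete]
    congr 1
  calc ∫ ω, cexp (I * (c * ((Q ω A).toReal - (μ A).toReal))) ∂P
      = ∫ ω, cexp (c * (Q ω A).toReal * I) * cexp (-(I * c * (μ A).toReal)) ∂P := by
        congr 1 with ω
        rw [← Complex.exp_add]
        ring_nf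
    _ = charFun Po(ℝ, (μ A).toNNReal) c * cexp (-(I * c * (μ A).toReal)) := by
        rw [integral_mul_const, charFun_apply_real, ← hX.integral_comp (by fun_prop)]
        rfl
    _ = cexp ((μ A).toReal * compensatedPoissonExponent c) := by
        rw [charFun_map_cast_poissonMeasure, ← Complex.exp_add, compensatedPoissonExponent,
          mul_comm (c : ℂ) I, ENNReal.coe_toNNReal_eq_toReal]
        congr 1
        ring

theorem integral_cexp_I_mul_compensatedIntegral_simpleFunc [IsProbabilityMeasure P]
    [SigmaFinite μ] (hQ : IsPoissonRandomMeasure P Q μ) (s : SimpleFunc E ℝ) (hs : Integrable s μ) :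
    ∫ ω, cexp (I * compensatedIntegral Q μ s ω) ∂P
      = cexp (∫ x, compensatedPoissonExponent (s x) ∂μ) := by
  let A : s.range → Set E := fun y => s ⁻¹' {(y : ℝ)}
  have hA : ∀ y, MeasurableSet (A y) := fun y => s.measurableSet_fiber _
  have hprod : ∀ᵐ ω ∂P, cexp (I * compensatedIntegral Q μ s ω)
      = ∏ y : s.range, cexp (I * (y * ((Q ω (A y)).toReal - (μ (A y)).toReal))) := by
    filter_upwards [hQ.ae_integrable s.measurable hs] with ω hω
    rw [compensatedIntegral_simpleFunc s hω hs, ← Finset.sum_coe_sort, ← Complex.exp_sum]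
    push_cast
    rw [Finset.mul_sum]
  have hfactor : ∀ y : s.range,
      ∫ ω, cexp (I * (y * ((Q ω (A y)).toReal - (μ (A y)).toReal))) ∂P
        = cexp ((μ (A y)).toReal * compensatedPoissonExponent y) := by
    rintro ⟨y, -⟩
    rcases eq_or_ne y 0 with rfl | hy
    · simp
    · exact hQ.integral_cexp_I_mul_compensated_apply (hA _)
        (s.measure_preimage_lt_top_of_integrable hs hy) y
  have hd : Pairwise (Disjoint on A) := fun y z hyz =>
    (Set.disjoint_singleton.2 (Subtype.coe_injective.ne hyz)).preimage s
  rw [integral_congr_ae hprod, (hQ.iIndepFun_apply hA hd).integral_fun_prod_comp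
      (f := fun y x => cexp (I * (y * (x.toReal - (μ (A y)).toReal))))
      (fun y => (hQ.measurable_apply (hA y)).aemeasurable) (fun y => by fun_prop),
    Fintype.prod_congr _ _ hfactor, ← Complex.exp_sum]
  have hint : ∫ x, compensatedPoissonExponent (s x) ∂μ
      = ∑ y ∈ s.range, μ.real (s ⁻¹' {y}) • compensatedPoissonExponent y := by
    rw [← SimpleFunc.map_integral s _ hs compensatedPoissonExponent_zero,
      SimpleFunc.integral_eq_integral _ hs.compensatedPoissonExponent_comp]
    rfl
  rw [hint]
  simp only [A, measureReal_def, Complex.real_smul]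
  exact congrArg cexp (Finset.sum_coe_sort s.range
    fun y => ((μ (s ⁻¹' {y})).toReal : ℂ) * compensatedPoissonExponent y)

lemma enorm_integral_cexp_I_mul_compensatedIntegral_sub_le [IsProbabilityMeasure P]
    [SigmaFinite μ] (hQ : IsPoissonRandomMeasure P Q μ) {g h : E → ℝ} (hgm : Measurable g)
    (hhm : Measurable h) (hg : Integrable g μ) (hh : Integrable h μ) :
    ‖∫ ω, cexp (I * compensatedIntegral Q μ g ω) ∂P
        - ∫ ω, cexp (I * compensatedIntegral Q μ h ω) ∂P‖ₑ
      ≤ 2 * ∫⁻ x, ‖g x - h x‖ₑ ∂μ := by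
  have hpt : ∀ᵐ ω ∂P,
      ‖cexp (I * compensatedIntegral Q μ g ω) - cexp (I * compensatedIntegral Q μ h ω)‖ₑ
        ≤ ∫⁻ x, ‖g x - h x‖ₑ ∂Q ω + ∫⁻ x, ‖g x - h x‖ₑ ∂μ := by
    filter_upwards [hQ.ae_integrable hgm hg, hQ.ae_integrable hhm hh] with ω hgω hhω
    calc _ ≤ ‖compensatedIntegral Q μ g ω - compensatedIntegral Q μ h ω‖ₑ :=
          enorm_cexp_I_mul_sub_cexp_I_mul_le _ _
      _ = ‖∫ x, g x - h x ∂Q ω - ∫ x, g x - h x ∂μ‖ₑ := by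
          rw [compensatedIntegral_sub hgω hhω hg hh, compensatedIntegral]
      _ ≤ _ := enorm_sub_le.trans (add_le_add (enorm_integral_le_lintegral_enorm _)
          (enorm_integral_le_lintegral_enorm _))
  rw [← integral_sub (hQ.integrable_cexp_I_mul_compensatedIntegral hgm)
    (hQ.integrable_cexp_I_mul_compensatedIntegral hhm)]
  calc _ ≤ ∫⁻ ω, ‖cexp (I * compensatedIntegral Q μ g ω)
        - cexp (I * compensatedIntegral Q μ h ω)‖ₑ ∂P := enorm_integral_le_lintegral_enorm _
    _ ≤ ∫⁻ ω, (∫⁻ x, ‖g x - h x‖ₑ ∂Q ω + ∫⁻ x, ‖g x - h x‖ₑ ∂μ) ∂P := lintegral_mono_ae hpt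
    _ = 2 * ∫⁻ x, ‖g x - h x‖ₑ ∂μ := by
        rw [lintegral_add_right _ measurable_const,
          hQ.lintegral_lintegral (g := fun x => ‖g x - h x‖ₑ) (hgm.sub hhm).enorm,
          lintegral_const, measure_univ, mul_one, two_mul]

theorem integral_cexp_I_mul_compensatedIntegral_of_measurable [IsProbabilityMeasure P]
    [SigmaFinite μ] (hQ : IsPoissonRandomMeasure P Q μ) {f : E → ℝ} (hfm : Measurable f)
    (hf : Integrable f μ) :
    ∫ ω, cexp (I * compensatedIntegral Q μ f ω) ∂P
      = cexp (∫ x, compensatedPoissonExponent (f x) ∂μ) := by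
  let s : ℕ → SimpleFunc E ℝ := SimpleFunc.approxOn f hfm (Set.range f ∪ {0}) 0 (by simp)
  have hs : ∀ n, Integrable (s n) μ := SimpleFunc.integrable_approxOn_range hfm hf
  have hd := SimpleFunc.tendsto_approxOn_range_L1_enorm hfm hf
  refine tendsto_nhds_unique (tendsto_of_enorm_sub_le ENNReal.ofNat_ne_top hd fun n =>
    hQ.enorm_integral_cexp_I_mul_compensatedIntegral_sub_le (s n).measurable hfm (hs n) hf) ?_
  refine (tendsto_congr fun n =>
    hQ.integral_cexp_I_mul_compensatedIntegral_simpleFunc (s n) (hs n)).2 ?_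
  exact (continuous_exp.tendsto _).comp (tendsto_of_enorm_sub_le ENNReal.ofNat_ne_top hd
    fun n => enorm_integral_compensatedPoissonExponent_sub_le (hs n) hf)

end IsPoissonRandomMeasure

/-- **Characteristic function of a compensated Poisson integral.** If `Q` is a Poisson
random measure with mean measure `μ` and `f ∈ L¹(μ)`, then
`E[exp(i Q̄(f))] = exp(μ(e^{if} − i f − 1))`. -/
theorem compensated_poisson_char_fun {Ω E : Type*} [MeasurableSpace Ω] [MeasurableSpace E]
    (P : Measure Ω) [IsProbabilityMeasure P] (Q : Ω → Measure E) (μ : Measure E)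
    [SigmaFinite μ] (hQ : IsPoissonRandomMeasure P Q μ) (f : E → ℝ)
    (hf1 : Integrable f μ) :
    ∫ ω, Complex.exp (Complex.I * (compensatedIntegral Q μ f ω : ℂ)) ∂P
      = Complex.exp (∫ x, (Complex.exp (Complex.I * (f x : ℂ)) - Complex.I * (f x : ℂ) - 1) ∂μ) := by
  obtain ⟨g, hgm, hfg⟩ := hf1.aemeasurable
  calc ∫ ω, cexp (I * compensatedIntegral Q μ f ω) ∂P
      = ∫ ω, cexp (I * compensatedIntegral Q μ g ω) ∂P :=
        integral_congr_ae ((hQ.compensatedIntegral_congr_ae hfg).fun_comp fun r => cexp (I * r))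
    _ = cexp (∫ x, compensatedPoissonExponent (g x) ∂μ) :=
        hQ.integral_cexp_I_mul_compensatedIntegral_of_measurable hgm (hf1.congr hfg)
    _ = cexp (∫ x, compensatedPoissonExponent (f x) ∂μ) := by
        congr 1
        exact integral_congr_ae (hfg.fun_comp compensatedPoissonExponent).symm
end

section
/- Let F : [0,∞) → [0,1] be nondecreasing, let C₀ > 0, L̄ ≥ 0, and suppose b̄ is measurable with sup_{0<t<T} b̄(t) ≤ C₀ and sup_{0<t<T} M₁(t) ≤ C₀, where M₁ solves M₁(t) = (1 − F(t)) + ∫₀ᵗ L̄ M₁(t−r) b̄(r) dr. Then there is a constant C (depending on T, C₀, L̄) such that for all 0 < s < t ≤ T, |M₁(t) − M₁(s)| ≤ C·((F(t) − F(s)) + (t − s)). -/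
/-!
Put `δ = t - s` and `φ u = M₁ (δ + u) - M₁ u`. Subtracting the renewal equations at `δ + u` and
`u` splits `φ u` into the increment of `1 - F`, a convolution of `b̄` with `φ` over `[0, u]`, and
the kernel integral over `[u, δ + u]`, whence
`|φ u| ≤ (F (δ + u) - F u) + L̄ C₀² δ + L̄ C₀ ∫₀ᵘ |φ|`.
Gronwall's lemma applied to `u ↦ ∫₀ᵘ |φ|` bounds `∫₀ˢ |φ|` by
`e^{L̄ C₀ s} (∫₀ˢ (F (δ + v) - F v) dv + L̄ C₀² δ s)`, and the integral of the increments of `F`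
telescopes to `∫ₛ^{s+δ} F - ∫₀^δ F ≤ δ` since `0 ≤ F ≤ 1`. Evaluating the first bound at `u = s`
gives the claim.
-/

open MeasureTheory Set Real intervalIntegral

lemma mul_integral_exp_mul (K u : ℝ) : K * ∫ v in (0:ℝ)..u, exp (K * v) = exp (K * u) - 1 := by
  rw [mul_integral_comp_mul_left, integral_exp, mul_zero, exp_zero]

lemma mul_integral_pow_div_factorial (K u : ℝ) (n : ℕ) :
    K * ∫ v in (0:ℝ)..u, (K * v) ^ n / n.factorial = (K * u) ^ (n + 1) / (n + 1).factorial := by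
  rw [intervalIntegral.integral_div, ← mul_div_assoc,
    mul_integral_comp_mul_left (f := fun x => x ^ n), integral_pow, Nat.factorial_succ]
  push_cast
  field_simp
  ring

theorem le_mul_exp_of_le_add_mul_integral {g A : ℝ → ℝ} {S K : ℝ} (hK : 0 ≤ K)
    (hg : IntervalIntegrable g volume 0 S) (hA : MonotoneOn A (Icc 0 S))
    (hA₀ : ∀ u ∈ Icc 0 S, 0 ≤ A u) (h : ∀ u ∈ Icc 0 S, g u ≤ A u + K * ∫ v in (0:ℝ)..u, g v) :
    ∀ u ∈ Icc 0 S, g u ≤ A u * exp (K * u) := by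
  set M := K * ∫ v in (0:ℝ)..S, |g v|
  have hg' : ∀ u ∈ Icc 0 S, IntervalIntegrable g volume 0 u := fun u hu =>
    hg.mono_set (uIcc_subset_uIcc_left (Icc_subset_uIcc hu))
  have hexp : ∀ u ∈ Icc 0 S, A u ≤ A u * exp (K * u) := fun u hu =>
    le_mul_of_one_le_right (hA₀ u hu) (one_le_exp (mul_nonneg hK hu.1))
  have hiter : ∀ n : ℕ, ∀ u ∈ Icc 0 S,
      g u ≤ A u * exp (K * u) + M * ((K * u) ^ n / n.factorial) := by
    intro n
    induction n with
    | zero =>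
      intro u hu
      have : ∫ v in (0:ℝ)..u, g v ≤ ∫ v in (0:ℝ)..S, |g v| :=
        (integral_mono_on hu.1 (hg' u hu) (hg' u hu).abs fun v _ => le_abs_self _).trans
          (integral_mono_interval le_rfl hu.1 hu.2 (.of_forall fun _ => abs_nonneg _) hg.abs)
      calc g u ≤ A u + K * ∫ v in (0:ℝ)..u, g v := h u hu
        _ ≤ A u * exp (K * u) + M := add_le_add (hexp u hu) (mul_le_mul_of_nonneg_left this hK)
        _ = _ := by simp
    | succ n ih =>
      intro u hu
      have hint : ∫ v in (0:ℝ)..u, g v ≤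
          ∫ v in (0:ℝ)..u, (A u * exp (K * v) + M * ((K * v) ^ n / n.factorial)) := by
        refine integral_mono_on hu.1 (hg' u hu)
          ((by fun_prop : Continuous _).intervalIntegrable _ _) fun v hv => ?_
        have hvS : v ∈ Icc 0 S := ⟨hv.1, hv.2.trans hu.2⟩
        calc g v ≤ A v * exp (K * v) + M * ((K * v) ^ n / n.factorial) := ih v hvS
          _ ≤ _ := by
            gcongr
            exact hA hvS hu hv.2
      calc g u ≤ A u + K * ∫ v in (0:ℝ)..u, g v := h u hu
        _ ≤ A u + K * ∫ v in (0:ℝ)..u, (A u * exp (K * v) + M * ((K * v) ^ n / n.factorial)) := by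
          gcongr
        _ = A u * exp (K * u) + M * ((K * u) ^ (n + 1) / (n + 1).factorial) := by
          rw [intervalIntegral.integral_add ((by fun_prop : Continuous _).intervalIntegrable _ _)
            ((by fun_prop : Continuous _).intervalIntegrable _ _),
            intervalIntegral.integral_const_mul, intervalIntegral.integral_const_mul, mul_add,
            mul_left_comm, mul_integral_exp_mul, mul_left_comm,
            mul_integral_pow_div_factorial]
          ring
  intro u hu
  have hlim : Filter.Tendsto (fun n : ℕ => A u * exp (K * u) + M * ((K * u) ^ n / n.factorial))
      Filter.atTop (nhds (A u * exp (K * u))) := by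
    simpa using ((FloorSemiring.tendsto_pow_div_factorial_atTop (K * u)).const_mul M).const_add
      (A u * exp (K * u))
  exact ge_of_tendsto' hlim fun n => hiter n u hu

theorem integral_le_exp_mul_integral_of_le_add_mul_integral {f a : ℝ → ℝ} {S K : ℝ}
    (hK : 0 ≤ K) (hS : 0 ≤ S) (hf : IntervalIntegrable f volume 0 S)
    (ha : IntervalIntegrable a volume 0 S) (ha₀ : ∀ u ∈ Icc 0 S, 0 ≤ a u)
    (h : ∀ u ∈ Icc 0 S, f u ≤ a u + K * ∫ v in (0:ℝ)..u, f v) :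
    ∫ v in (0:ℝ)..S, f v ≤ exp (K * S) * ∫ v in (0:ℝ)..S, a v := by
  set F := fun u => ∫ v in (0:ℝ)..u, f v
  set A := fun u => ∫ v in (0:ℝ)..u, a v
  have hF : ContinuousOn F (uIcc 0 S) := continuousOn_primitive_interval' hf left_mem_uIcc
  have hFi : IntervalIntegrable F volume 0 S := hF.intervalIntegrable
  have ha' : ∀ u ∈ Icc 0 S, IntervalIntegrable a volume 0 u := fun u hu =>
    ha.mono_set (uIcc_subset_uIcc_left (Icc_subset_uIcc hu))
  have hA : MonotoneOn A (Icc 0 S) := fun u hu w hw huw =>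
    integral_mono_interval le_rfl hu.1 huw
      (ae_restrict_of_forall_mem measurableSet_Ioc fun x hx => ha₀ x ⟨hx.1.le, hx.2.trans hw.2⟩)
      (ha' w hw)
  have hA₀ : ∀ u ∈ Icc 0 S, 0 ≤ A u := fun u hu =>
    integral_nonneg hu.1 fun x hx => ha₀ x ⟨hx.1, hx.2.trans hu.2⟩
  have hFA : ∀ u ∈ Icc 0 S, F u ≤ A u + K * ∫ v in (0:ℝ)..u, F v := by
    intro u hu
    have hFu := hFi.mono_set (uIcc_subset_uIcc_left (Icc_subset_uIcc hu))
    have hfu := hf.mono_set (uIcc_subset_uIcc_left (Icc_subset_uIcc hu))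
    calc F u ≤ ∫ v in (0:ℝ)..u, (a v + K * F v) :=
          integral_mono_on hu.1 hfu ((ha' u hu).add (hFu.const_mul K))
            fun v hv => h v ⟨hv.1, hv.2.trans hu.2⟩
      _ = A u + K * ∫ v in (0:ℝ)..u, F v := by
        rw [intervalIntegral.integral_add (ha' u hu) (hFu.const_mul K),
          intervalIntegral.integral_const_mul]
  simpa only [mul_comm] using le_mul_exp_of_le_add_mul_integral hK hFi hA hA₀ hFA S ⟨hS, le_rfl⟩

lemma intervalIntegrable_of_abs_le_on_Ioo {g : ℝ → ℝ} {a c C : ℝ} (hac : a ≤ c)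
    (hg : Measurable g) (h : ∀ x ∈ Ioo a c, |g x| ≤ C) : IntervalIntegrable g volume a c := by
  rw [intervalIntegrable_iff_integrableOn_Ioo_of_le hac]
  exact Measure.integrableOn_of_bounded (by simp) hg.aestronglyMeasurable
    (ae_restrict_of_forall_mem measurableSet_Ioo h)

lemma ae_mem_Ioc_imp_of_forall_mem_Ioo {p : ℝ → Prop} {a c : ℝ} (h : ∀ x ∈ Ioo a c, p x) :
    ∀ᵐ x, x ∈ Ioc a c → p x := by
  filter_upwards [Measure.ae_ne volume c] with x hxc hx using h x ⟨hx.1, hx.2.lt_of_ne hxc⟩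

lemma integral_abs_shift_sub_le_of_monotoneOn {F : ℝ → ℝ} (hF : MonotoneOn F (Ici 0))
    (hF01 : ∀ t ≥ (0:ℝ), F t ∈ Icc (0:ℝ) 1) {δ s : ℝ} (hδ : 0 ≤ δ) (hs : 0 ≤ s) :
    ∫ v in (0:ℝ)..s, |F (δ + v) - F v| ≤ δ := by
  have hFi : ∀ a c : ℝ, 0 ≤ a → 0 ≤ c → IntervalIntegrable F volume a c := fun a c ha hc =>
    (hF.mono fun x hx => le_trans (le_min ha hc) hx.1).intervalIntegrable
  have hshift : IntervalIntegrable (fun v => F (δ + v)) volume 0 s := by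
    simpa using (hFi δ (δ + s) hδ (by linarith)).comp_add_left δ
  have habs : ∫ v in (0:ℝ)..s, |F (δ + v) - F v| = ∫ v in (0:ℝ)..s, (F (δ + v) - F v) :=
    integral_congr fun v hv => by
      rw [uIcc_of_le hs] at hv
      exact abs_of_nonneg (sub_nonneg.2 (hF hv.1 (by simp; linarith [hv.1]) (by linarith)))
  have htele : ∫ v in (0:ℝ)..s, (F (δ + v) - F v)
      = (∫ v in s..δ + s, F v) - ∫ v in (0:ℝ)..δ, F v := by
    rw [intervalIntegral.integral_sub hshift (hFi 0 s le_rfl hs), integral_comp_add_left,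
      add_zero, integral_interval_sub_interval_comm' (hFi δ (δ + s) hδ (by linarith))
        (hFi 0 s le_rfl hs) (hFi δ 0 hδ le_rfl)]
  have hupper : ∫ v in s..δ + s, F v ≤ δ := by
    simpa using integral_mono_on (by linarith) (hFi s (δ + s) hs (by linarith))
      intervalIntegrable_const fun v hv => (hF01 v (hs.trans hv.1)).2
  have hlower : 0 ≤ ∫ v in (0:ℝ)..δ, F v :=
    integral_nonneg hδ fun v hv => (hF01 v hv.1).1
  linarith

section RenewalEquation

variable {T C₀ B L : ℝ} {f b M : ℝ → ℝ}

lemma abs_kernel_le (hMB : ∀ t ∈ Ioo 0 T, |M t| ≤ C₀) (hbB : ∀ t ∈ Ioo 0 T, |b t| ≤ B)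
    {τ r : ℝ} (hr : r ∈ Ioo 0 τ) (hτ : τ ≤ T) : |L * M (τ - r) * b r| ≤ |L| * C₀ * B := by
  have hM := hMB (τ - r) ⟨by linarith [hr.2], by linarith [hr.1]⟩
  have hb := hbB r ⟨hr.1, hr.2.trans_le hτ⟩
  rw [abs_mul, abs_mul, mul_assoc, mul_assoc]
  gcongr
  exact (abs_nonneg _).trans hM

lemma intervalIntegrable_kernel (hM : Measurable M) (hb : Measurable b)
    (hMB : ∀ t ∈ Ioo 0 T, |M t| ≤ C₀) (hbB : ∀ t ∈ Ioo 0 T, |b t| ≤ B) {τ α β : ℝ}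
    (hα : 0 ≤ α) (hαβ : α ≤ β) (hβ : β ≤ τ) (hτ : τ ≤ T) :
    IntervalIntegrable (fun r => L * M (τ - r) * b r) volume α β :=
  intervalIntegrable_of_abs_le_on_Ioo hαβ (by fun_prop) fun r hr =>
    abs_kernel_le hMB hbB ⟨hα.trans_lt hr.1, hr.2.trans_le hβ⟩ hτ

lemma intervalIntegrable_shift_sub (hM : Measurable M) (hMB : ∀ t ∈ Ioo 0 T, |M t| ≤ C₀)
    {δ s : ℝ} (hδ : 0 ≤ δ) (hs : 0 ≤ s) (hT : δ + s ≤ T) :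
    IntervalIntegrable (fun v => M (δ + v) - M v) volume 0 s :=
  intervalIntegrable_of_abs_le_on_Ioo hs (by fun_prop) fun v hv =>
    (abs_sub _ _).trans <| add_le_add (hMB _ ⟨by linarith [hv.1], by linarith [hv.2]⟩)
      (hMB _ ⟨hv.1, by linarith [hv.2]⟩)

lemma abs_shift_sub_le_of_renewal (hM : Measurable M) (hb : Measurable b)
    (hMB : ∀ t ∈ Ioo 0 T, |M t| ≤ C₀) (hbB : ∀ t ∈ Ioo 0 T, |b t| ≤ B)
    (heq : ∀ t ≥ (0:ℝ), M t = f t + ∫ r in (0:ℝ)..t, L * M (t - r) * b r)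
    {δ u : ℝ} (hδ : 0 ≤ δ) (hu : 0 ≤ u) (hT : δ + u ≤ T) :
    |M (δ + u) - M u| ≤ |f (δ + u) - f u| + |L| * C₀ * B * δ
      + |L| * B * ∫ v in (0:ℝ)..u, |M (δ + v) - M v| := by
  set t := δ + u
  have I₁ := intervalIntegrable_kernel (L := L) (τ := t) hM hb hMB hbB le_rfl hu
    (by linarith) hT
  have I₂ := intervalIntegrable_kernel (L := L) hM hb hMB hbB hu (by linarith) le_rfl hT
  have I₃ := intervalIntegrable_kernel (L := L) hM hb hMB hbB le_rfl hu le_rfl (by linarith)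
  have hsplit : M t - M u = (f t - f u)
      + (∫ r in (0:ℝ)..u, (L * M (t - r) * b r - L * M (u - r) * b r))
      + ∫ r in u..t, L * M (t - r) * b r := by
    rw [heq t (by linarith), heq u hu, ← integral_add_adjacent_intervals I₁ I₂,
      intervalIntegral.integral_sub I₁ I₃]
    ring
  have htail : |∫ r in u..t, L * M (t - r) * b r| ≤ |L| * C₀ * B * δ := by
    have := norm_integral_le_of_norm_le (f := fun r => L * M (t - r) * b r)
      (g := fun _ => |L| * C₀ * B) (by linarith) (ae_mem_Ioc_imp_of_forall_mem_Ioo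
        fun r hr => abs_kernel_le hMB hbB ⟨hu.trans_lt hr.1, hr.2⟩ hT) intervalIntegrable_const
    rwa [intervalIntegral.integral_const, smul_eq_mul, show t - u = δ by ring, mul_comm δ,
      Real.norm_eq_abs] at this
  have hconv : |∫ r in (0:ℝ)..u, (L * M (t - r) * b r - L * M (u - r) * b r)|
      ≤ |L| * B * ∫ v in (0:ℝ)..u, |M (δ + v) - M v| := by
    have hφ : IntervalIntegrable (fun r => |M (δ + (u - r)) - M (u - r)|) volume 0 u := by
      simpa using ((intervalIntegrable_shift_sub hM hMB hδ hu hT).abs.comp_sub_left u).symm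
    have hpt : ∀ r ∈ Ioo 0 u, ‖L * M (t - r) * b r - L * M (u - r) * b r‖
        ≤ |L| * B * |M (δ + (u - r)) - M (u - r)| := fun r hr => by
      rw [Real.norm_eq_abs, show t - r = δ + (u - r) by ring, ← sub_mul, ← mul_sub, abs_mul,
        abs_mul, mul_right_comm]
      gcongr
      exact hbB r ⟨hr.1, by linarith [hr.2]⟩
    have := norm_integral_le_of_norm_le hu (ae_mem_Ioc_imp_of_forall_mem_Ioo hpt)
      (hφ.const_mul (|L| * B))
    rwa [intervalIntegral.integral_const_mul,
      intervalIntegral.integral_comp_sub_left (fun v => |M (δ + v) - M v|), sub_self, sub_zero,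
      Real.norm_eq_abs] at this
  calc |M t - M u| ≤ |f t - f u|
        + |∫ r in (0:ℝ)..u, (L * M (t - r) * b r - L * M (u - r) * b r)|
        + |∫ r in u..t, L * M (t - r) * b r| := hsplit ▸ abs_add_three _ _ _
    _ ≤ _ := by linarith

lemma integral_abs_shift_sub_le_of_renewal (hC₀ : 0 ≤ C₀) (hB : 0 ≤ B) (hM : Measurable M)
    (hb : Measurable b) (hMB : ∀ t ∈ Ioo 0 T, |M t| ≤ C₀) (hbB : ∀ t ∈ Ioo 0 T, |b t| ≤ B)
    (heq : ∀ t ≥ (0:ℝ), M t = f t + ∫ r in (0:ℝ)..t, L * M (t - r) * b r)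
    (hf : IntervalIntegrable f volume 0 T) {δ s : ℝ} (hδ : 0 ≤ δ) (hs : 0 ≤ s) (hT : δ + s ≤ T) :
    ∫ v in (0:ℝ)..s, |M (δ + v) - M v|
      ≤ exp (|L| * B * s) * ((∫ v in (0:ℝ)..s, |f (δ + v) - f v|) + |L| * C₀ * B * δ * s) := by
  have hf_shift : IntervalIntegrable (fun v => f (δ + v)) volume 0 s := by
    simpa using (hf.mono_set (uIcc_subset_uIcc (mem_uIcc_of_le hδ (by linarith))
      (mem_uIcc_of_le (by linarith) hT))).comp_add_left δ
  have hf_s : IntervalIntegrable f volume 0 s :=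
    hf.mono_set (uIcc_subset_uIcc_left (mem_uIcc_of_le hs (by linarith)))
  have hΔf := (hf_shift.sub hf_s).abs
  have := integral_le_exp_mul_integral_of_le_add_mul_integral (by positivity) hs
    (intervalIntegrable_shift_sub hM hMB hδ hs hT).abs (hΔf.add intervalIntegrable_const)
    (fun u _ => by positivity)
    fun u hu => abs_shift_sub_le_of_renewal hM hb hMB hbB heq hδ hu.1 (by linarith [hu.2])
  rwa [intervalIntegral.integral_add hΔf intervalIntegrable_const,
    intervalIntegral.integral_const, smul_eq_mul, sub_zero, mul_comm s] at this

end RenewalEquation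

theorem cmj_mean_increment_bound_general (T C₀ Lbar : ℝ) (hT : 0 < T) (hC₀ : 0 < C₀)
    (F bbar M₁ : ℝ → ℝ)
    (hF : MonotoneOn F (Set.Ici 0)) (hFrange : ∀ t ≥ (0:ℝ), F t ∈ Set.Icc (0:ℝ) 1)
    (hb : Measurable bbar) (hbnn : ∀ t ≥ (0:ℝ), 0 ≤ bbar t)
    (hbB : ∀ t ∈ Set.Ioo (0:ℝ) T, bbar t ≤ C₀)
    (hM : Measurable M₁) (hMB : ∀ t ∈ Set.Ioo (0:ℝ) T, M₁ t ≤ C₀)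
    (hMnn : ∀ t ≥ (0:ℝ), 0 ≤ M₁ t)
    (heq : ∀ t ≥ (0:ℝ), M₁ t = (1 - F t) + ∫ r in (0:ℝ)..t, Lbar * M₁ (t - r) * bbar r) :
    ∃ C > (0:ℝ), ∀ s t : ℝ, 0 < s → s < t → t ≤ T →
      |M₁ t - M₁ s| ≤ C * ((F t - F s) + (t - s)) := by
  have hMB' : ∀ t ∈ Ioo 0 T, |M₁ t| ≤ C₀ := fun t ht =>
    (abs_of_nonneg (hMnn t ht.1.le)).trans_le (hMB t ht)
  have hbB' : ∀ t ∈ Ioo 0 T, |bbar t| ≤ C₀ := fun t ht =>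
    (abs_of_nonneg (hbnn t ht.1.le)).trans_le (hbB t ht)
  have hf : IntervalIntegrable (fun t => 1 - F t) volume 0 T := intervalIntegrable_const.sub
    (hF.mono (uIcc_of_le hT.le ▸ Icc_subset_Ici_self)).intervalIntegrable
  have hΔF : ∀ x y, |1 - F x - (1 - F y)| = |F x - F y| := fun x y => by
    rw [sub_sub_sub_cancel_left, abs_sub_comm]
  set K := |Lbar| * C₀ with hK
  set D := K * C₀ with hD
  refine ⟨1 + D + K * exp (K * T) * (1 + D * T), by positivity, fun s t hs hst htT => ?_⟩
  obtain ⟨δ, hδ, rfl⟩ : ∃ δ > 0, t = δ + s := ⟨t - s, by linarith, by ring⟩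
  have hpt := abs_shift_sub_le_of_renewal hM hb hMB' hbB' heq hδ.le hs.le htT
  have hint := integral_abs_shift_sub_le_of_renewal hC₀.le hC₀.le hM hb hMB' hbB' heq hf hδ.le
    hs.le htT
  have hFint := integral_abs_shift_sub_le_of_monotoneOn hF hFrange hδ.le hs.le
  have hFinc : 0 ≤ F (δ + s) - F s :=
    sub_nonneg.2 (hF hs.le (mem_Ici.2 (by linarith)) (by linarith))
  simp only [hΔF, abs_of_nonneg hFinc, ← hK, ← hD] at hpt hint
  have hφ : ∫ v in (0:ℝ)..s, |M₁ (δ + v) - M₁ v| ≤ exp (K * T) * (δ + D * δ * T) :=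
    hint.trans <| mul_le_mul (exp_le_exp.2 (by gcongr; linarith)) (by gcongr; linarith)
      (add_nonneg (integral_nonneg hs.le fun _ _ => abs_nonneg _) (by positivity)) (exp_pos _).le
  calc |M₁ (δ + s) - M₁ s|
      ≤ (F (δ + s) - F s) + D * δ + K * (exp (K * T) * (δ + D * δ * T)) := hpt.trans (by gcongr)
    _ ≤ (1 + D + K * exp (K * T) * (1 + D * T)) * ((F (δ + s) - F s) + (δ + s - s)) := by
        have hE : 0 ≤ K * exp (K * T) * (1 + D * T) := by positivity
        rw [add_sub_cancel_right]
        nlinarith [mul_nonneg hE hFinc, mul_nonneg (by positivity : 0 ≤ D) hFinc]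

/-- **Increment estimate for the mean of the CMJ process.** If `M₁` solves the renewal
equation `M₁ t = (1 − F t) + ∫₀ᵗ L̄ M₁(t−r) b̄(r) dr`, with `F` nondecreasing `[0,1]`-valued,
`b̄ ≤ C₀` and `M₁ ≤ C₀` on `(0,T)`, then there is a constant `C` such that for all
`0 < s < t ≤ T`, `|M₁ t − M₁ s| ≤ C ((F t − F s) + (t − s))`. -/
theorem cmj_mean_increment_bound (T C₀ Lbar : ℝ) (hT : 0 < T) (hC₀ : 0 < C₀) (hL : 0 ≤ Lbar)
    (F bbar M₁ : ℝ → ℝ)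
    (hF : MonotoneOn F (Set.Ici 0)) (hFrange : ∀ t ≥ (0:ℝ), F t ∈ Set.Icc (0:ℝ) 1)
    (hb : Measurable bbar) (hbnn : ∀ t ≥ (0:ℝ), 0 ≤ bbar t)
    (hbB : ∀ t ∈ Set.Ioo (0:ℝ) T, bbar t ≤ C₀)
    (hM : Measurable M₁) (hMB : ∀ t ∈ Set.Ioo (0:ℝ) T, M₁ t ≤ C₀)
    (hMnn : ∀ t ≥ (0:ℝ), 0 ≤ M₁ t)
    (heq : ∀ t ≥ (0:ℝ), M₁ t = (1 - F t) + ∫ r in (0:ℝ)..t, Lbar * M₁ (t - r) * bbar r) :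
    ∃ C > (0:ℝ), ∀ s t : ℝ, 0 < s → s < t → t ≤ T →
      |M₁ t - M₁ s| ≤ C * ((F t - F s) + (t - s)) :=
  cmj_mean_increment_bound_general T C₀ Lbar hT hC₀ F bbar M₁ hF hFrange hb hbnn hbB hM hMB hMnn heq
end
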